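/- arXiv:2105.00151 — 2 statements merged into one kernel-verified Lean document; each statement's English description precedes it below -/
import Mathlib

section
/- Let A, B ⊆ ℝ² be nonempty compact sets such that B is connected and A ∪ B is connected. Then the Lebesgue measure of {(θ,ρ) ∈ [0,2π) × ℝ : G(θ,ρ) ∩ A ≠ ∅ ∧ G(θ,ρ) ∩ B = ∅} equals 2 · (P(A ∪ B) − P(B)). (The identity m(G ∩ conv(I_i, l(s,t)) ≠ ∅, G ∩ l(s,t) = ∅) = ℒ(conv(I_i, l(s,t))) − ℒ(l(s,t)) established in the proof of Theorem 3, with A the inner part and B the segment, stated for directed lines.) -/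
/-!
For compact connected `X`, the image of `X` under `x ↦ ⟪x, u θ⟫` is the interval between the
support values `-h_X(-u θ)` and `h_X(u θ)`, so by Fubini the directed lines meeting `X` have
measure `∫ (h_X(u θ) + h_X(-u θ)) dθ = 2 P(X)`. A line meets `A` and misses `B` iff it meets
`A ∪ B` and misses `B`, so the measure in question is the difference of these measures for
`A ∪ B` and for `B`.
-/

open MeasureTheory Real Set
open scoped InnerProductSpace

noncomputable def u (θ : ℝ) : EuclideanSpace ℝ (Fin 2) :=
  !₂[Real.cos θ, Real.sin θ]

/-- The (directed) line with normal direction `u θ` at signed distance `ρ`. -/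
def G (θ ρ : ℝ) : Set (EuclideanSpace ℝ (Fin 2)) :=
  {x | ⟪x, u θ⟫_ℝ = ρ}

/-- The disaster area: the closed half-plane to the `u θ` side of the line `G θ ρ`. -/
def R (θ ρ : ℝ) : Set (EuclideanSpace ℝ (Fin 2)) :=
  {x | ⟪x, u θ⟫_ℝ ≥ ρ}

/-- Support integral: integral of the support function over all directions;
equals the perimeter of the convex hull. -/
noncomputable def P (X : Set (EuclideanSpace ℝ (Fin 2))) : ℝ :=
  ∫ θ in (0:ℝ)..(2 * Real.pi), sSup {r : ℝ | ∃ x ∈ X, r = ⟪x, u θ⟫_ℝ}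

section SupportFunction

variable {E : Type*} [NormedAddCommGroup E] [InnerProductSpace ℝ E]

noncomputable def supportFun (X : Set E) (v : E) : ℝ :=
  sSup ((fun x => ⟪x, v⟫_ℝ) '' X)

theorem bddAbove_image_inner {X : Set E} (hX : Bornology.IsBounded X) (v : E) :
    BddAbove ((fun x => ⟪x, v⟫_ℝ) '' X) := by
  obtain ⟨C, hC⟩ := hX.exists_norm_le
  refine ⟨C * ‖v‖, ?_⟩
  rintro _ ⟨x, hx, rfl⟩
  exact (real_inner_le_norm x v).trans (by gcongr; exact hC x hx)

theorem inner_le_supportFun {X : Set E} (hX : Bornology.IsBounded X) {x : E} (hx : x ∈ X)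
    (v : E) : ⟪x, v⟫_ℝ ≤ supportFun X v :=
  le_csSup (bddAbove_image_inner hX v) ⟨x, hx, rfl⟩

theorem neg_supportFun_neg_le_inner {X : Set E} (hX : Bornology.IsBounded X) {x : E}
    (hx : x ∈ X) (v : E) : -supportFun X (-v) ≤ ⟪x, v⟫_ℝ := by
  have := inner_le_supportFun hX hx (-v)
  rw [inner_neg_right] at this
  linarith

theorem neg_supportFun_neg_le_supportFun {X : Set E} (hX : Bornology.IsBounded X)
    (hne : X.Nonempty) (v : E) : -supportFun X (-v) ≤ supportFun X v :=
  (neg_supportFun_neg_le_inner hX hne.some_mem v).trans (inner_le_supportFun hX hne.some_mem v)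

theorem lipschitzWith_supportFun {X : Set E} {C : ℝ} (hC : ∀ x ∈ X, ‖x‖ ≤ C)
    (hne : X.Nonempty) : LipschitzWith C.toNNReal (supportFun X) := by
  have hX : Bornology.IsBounded X := isBounded_iff_forall_norm_le.2 ⟨C, hC⟩
  refine LipschitzWith.of_le_add_mul' C fun v w => csSup_le (hne.image _) ?_
  rintro _ ⟨x, hx, rfl⟩
  calc ⟪x, v⟫_ℝ = ⟪x, w⟫_ℝ + ⟪x, v - w⟫_ℝ := by rw [inner_sub_right]; ring
    _ ≤ supportFun X w + C * dist v w := by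
      gcongr
      · exact inner_le_supportFun hX hx w
      · rw [dist_eq_norm]
        exact (real_inner_le_norm x (v - w)).trans (by gcongr; exact hC x hx)

theorem continuous_supportFun {X : Set E} (hX : Bornology.IsBounded X) (hne : X.Nonempty) :
    Continuous (supportFun X) := by
  obtain ⟨C, hC⟩ := hX.exists_norm_le
  exact (lipschitzWith_supportFun hC hne).continuous

theorem image_inner_eq_Icc {X : Set E} (hXc : IsCompact X) (hX : IsConnected X) (v : E) :
    (fun x => ⟪x, v⟫_ℝ) '' X = Icc (-supportFun X (-v)) (supportFun X v) := by
  have hcont : Continuous fun x : E => ⟪x, v⟫_ℝ := by fun_prop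
  have himage_neg : (fun x => ⟪x, -v⟫_ℝ) '' X = -((fun x => ⟪x, v⟫_ℝ) '' X) := by
    simp only [inner_neg_right, ← image_neg_eq_neg, image_image]
  rw [eq_Icc_of_connected_compact (hX.image _ hcont.continuousOn) (hXc.image hcont),
    Real.sInf_def, supportFun, supportFun, himage_neg]

end SupportFunction

theorem volume_region_between_cc_eq_lintegral {α : Type*} [MeasurableSpace α] {μ : Measure α}
    {f g : α → ℝ} {s : Set α} (hf : Measurable f) (hg : Measurable g) (hs : MeasurableSet s) :
    μ.prod volume {p : α × ℝ | p.1 ∈ s ∧ p.2 ∈ Icc (f p.1) (g p.1)} =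
      ∫⁻ y in s, ENNReal.ofReal (g y - f y) ∂μ := by
  rw [Measure.prod_apply (measurableSet_region_between_cc hf hg hs), ← lintegral_indicator hs]
  congr 1 with y
  by_cases hy : y ∈ s
  · rw [indicator_of_mem hy, ← Real.volume_Icc]
    congr 1 with t
    simp [hy]
  · simp [hy]

theorem continuous_u : Continuous u := by
  unfold u
  fun_prop

theorem u_add_pi (θ : ℝ) : u (θ + π) = -u θ := by
  ext i
  fin_cases i <;> simp [u, Real.cos_add_pi, Real.sin_add_pi]

theorem u_add_two_pi (θ : ℝ) : u (θ + 2 * π) = u θ := by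
  ext i
  fin_cases i <;> simp [u, Real.cos_add_two_pi, Real.sin_add_two_pi]

theorem P_eq_integral_supportFun (X : Set (EuclideanSpace ℝ (Fin 2))) :
    P X = ∫ θ in (0:ℝ)..(2 * π), supportFun X (u θ) := by
  simp only [P, supportFun, image, eq_comm]

/-- Each direction `v` is counted twice, as `u θ` and as `-u θ = u (θ + π)`. -/
theorem integral_supportFun_add_supportFun_neg {X : Set (EuclideanSpace ℝ (Fin 2))}
    (hX : Bornology.IsBounded X) (hne : X.Nonempty) :
    ∫ θ in (0:ℝ)..(2 * π), (supportFun X (u θ) + supportFun X (-u θ)) = 2 * P X := by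
  have hcont : Continuous fun θ => supportFun X (u θ) :=
    (continuous_supportFun hX hne).comp continuous_u
  have hper : Function.Periodic (fun θ => supportFun X (u θ)) (2 * π) := fun θ => by
    simp only [u_add_two_pi]
  have hneg : ∫ θ in (0:ℝ)..(2 * π), supportFun X (-u θ) = P X := by
    simp only [← u_add_pi]
    rw [intervalIntegral.integral_comp_add_right (fun θ => supportFun X (u θ)),
      zero_add, add_comm (2 * π), hper.intervalIntegral_add_eq π 0, zero_add,
      P_eq_integral_supportFun]
  rw [intervalIntegral.integral_add (hcont.intervalIntegrable _ _) ?_, hneg,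
    ← P_eq_integral_supportFun]
  · ring
  · simp only [← u_add_pi]
    exact (hcont.comp (continuous_add_const π)).intervalIntegrable _ _

theorem P_nonneg {X : Set (EuclideanSpace ℝ (Fin 2))} (hX : Bornology.IsBounded X)
    (hne : X.Nonempty) : 0 ≤ P X := by
  have : 0 ≤ 2 * P X := by
    rw [← integral_supportFun_add_supportFun_neg hX hne]
    refine intervalIntegral.integral_nonneg (by positivity) fun θ _ => ?_
    linarith [neg_supportFun_neg_le_supportFun hX hne (u θ)]
  linarith

def linesMeeting (X : Set (EuclideanSpace ℝ (Fin 2))) : Set (ℝ × ℝ) :=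
  {p | p.1 ∈ Ico 0 (2 * π) ∧ (G p.1 p.2 ∩ X).Nonempty}

theorem linesMeeting_union (X Y : Set (EuclideanSpace ℝ (Fin 2))) :
    linesMeeting (X ∪ Y) = linesMeeting X ∪ linesMeeting Y := by
  ext p
  simp only [linesMeeting, mem_ofPred_eq, mem_union, inter_union_distrib_left, union_nonempty,
    and_or_left]

theorem linesMeeting_eq_region {X : Set (EuclideanSpace ℝ (Fin 2))} (hXc : IsCompact X)
    (hX : IsConnected X) :
    linesMeeting X = {p : ℝ × ℝ | p.1 ∈ Ico 0 (2 * π) ∧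
      p.2 ∈ Icc (-supportFun X (-u p.1)) (supportFun X (u p.1))} := by
  ext ⟨θ, ρ⟩
  simp only [linesMeeting, mem_ofPred_eq, ← image_inner_eq_Icc hXc hX, G, mem_image]
  exact and_congr_right fun _ => ⟨fun ⟨x, hρ, hx⟩ => ⟨x, hx, hρ⟩, fun ⟨x, hx, hρ⟩ => ⟨x, hρ, hx⟩⟩

/-- Cauchy's formula, for directed lines. -/
theorem volume_linesMeeting {X : Set (EuclideanSpace ℝ (Fin 2))} (hXc : IsCompact X)
    (hX : IsConnected X) : volume (linesMeeting X) = ENNReal.ofReal (2 * P X) := by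
  have hcont : Continuous (supportFun X) := continuous_supportFun hXc.isBounded hX.nonempty
  have hupper : Continuous fun θ => supportFun X (u θ) := hcont.comp continuous_u
  have hlower : Continuous fun θ => -supportFun X (-u θ) := (hcont.comp continuous_u.neg).neg
  have hwidth : Continuous fun θ => supportFun X (u θ) - -supportFun X (-u θ) := hupper.sub hlower
  rw [linesMeeting_eq_region hXc hX, Measure.volume_eq_prod,
    volume_region_between_cc_eq_lintegral hlower.measurable hupper.measurable measurableSet_Ico,
    ← ofReal_integral_eq_lintegral_ofReal (hwidth.integrableOn_Icc.mono_set
      Ico_subset_Icc_self) (Filter.Eventually.of_forall fun θ =>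
        sub_nonneg.2 (neg_supportFun_neg_le_supportFun hXc.isBounded hX.nonempty (u θ))),
    setIntegral_congr_set Ico_ae_eq_Ioc, ← intervalIntegral.integral_of_le (by positivity),
    ← integral_supportFun_add_supportFun_neg hXc.isBounded hX.nonempty]
  simp only [sub_neg_eq_add]

theorem measurableSet_linesMeeting {X : Set (EuclideanSpace ℝ (Fin 2))} (hXc : IsCompact X)
    (hX : IsConnected X) : MeasurableSet (linesMeeting X) := by
  have hcont : Continuous (supportFun X) := continuous_supportFun hXc.isBounded hX.nonempty
  rw [linesMeeting_eq_region hXc hX]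
  exact measurableSet_region_between_cc (hcont.comp continuous_u.neg).neg.measurable
    (hcont.comp continuous_u).measurable measurableSet_Ico

theorem stmt_7_general (A B : Set (EuclideanSpace ℝ (Fin 2)))
    (hAc : IsCompact A)
    (hBc : IsCompact B)
    (hBconn : IsConnected B) (hABconn : IsConnected (A ∪ B)) :
    volume {p : ℝ × ℝ | p ∈ Set.Ico 0 (2 * Real.pi) ×ˢ (Set.univ : Set ℝ) ∧
        (G p.1 p.2 ∩ A).Nonempty ∧ G p.1 p.2 ∩ B = ∅}
      = ENNReal.ofReal (2 * (P (A ∪ B) - P B)) := by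
  have hset : {p : ℝ × ℝ | p ∈ Set.Ico 0 (2 * Real.pi) ×ˢ (Set.univ : Set ℝ) ∧
      (G p.1 p.2 ∩ A).Nonempty ∧ G p.1 p.2 ∩ B = ∅} = linesMeeting A \ linesMeeting B := by
    ext p
    simp only [linesMeeting, mem_ofPred_eq, mem_prod, mem_univ, and_true, mem_sdiff, not_and,
      not_nonempty_iff_eq_empty]
    tauto
  have hABc : IsCompact (A ∪ B) := hAc.union hBc
  rw [hset, measure_sdiff' _ (measurableSet_linesMeeting hBc hBconn).nullMeasurableSet
      (volume_linesMeeting hBc hBconn ▸ ENNReal.ofReal_ne_top), ← linesMeeting_union,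
    volume_linesMeeting hABc hABconn, volume_linesMeeting hBc hBconn,
    ← ENNReal.ofReal_sub _ (by linarith [P_nonneg hBc.isBounded hBconn.nonempty]), mul_sub]

/-- The identity `m(G ∩ conv(A ∪ B) ≠ ∅, G ∩ B = ∅) = ℒ(conv(A ∪ B)) − ℒ(conv B)`
from the proof of Theorem 3, stated for directed lines. -/
theorem stmt_7 (A B : Set (EuclideanSpace ℝ (Fin 2)))
    (hAc : IsCompact A) (hAne : A.Nonempty)
    (hBc : IsCompact B) (hBne : B.Nonempty)
    (hBconn : IsConnected B) (hABconn : IsConnected (A ∪ B)) :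
    volume {p : ℝ × ℝ | p ∈ Set.Ico 0 (2 * Real.pi) ×ˢ (Set.univ : Set ℝ) ∧
        (G p.1 p.2 ∩ A).Nonempty ∧ G p.1 p.2 ∩ B = ∅}
      = ENNReal.ofReal (2 * (P (A ∪ B) - P B)) :=
  stmt_7_general A B hAc hBc hBconn hABconn
end

section
/- Let K ⊆ ℝ² be a nonempty compact convex set, let s, t ∈ frontier K, and let Γ ⊆ ℝ² (the protected part) satisfy s ∉ Γ and t ∉ Γ. Then for every (θ,ρ): there exists a connected set S ⊆ frontier K with s ∈ S, t ∈ S and (S \ Γ) ∩ R(θ,ρ) = ∅ if and only if there exists a connected set S ⊆ frontier K with s ∈ S, t ∈ S and S ∩ R(θ,ρ) = ∅. (Theorem 4(2) of the paper for a convex two-route network without inner parts: a partial protect arrangement whose protected part Γ contains neither s nor t does not improve the probability of connecting s and t over the weakest arrangement — the disconnection events coincide.) -/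
/-!
Write `f = ⟪·, u θ⟫`, so that `f s, f t < ρ`. If `K` has empty interior, its frontier is its
closure, and the part of the closure in `{f < ρ}` is convex. Otherwise take `c ∈ interior K` and
project radially from `c` onto the frontier, `x ↦ c + (x - c) / gauge (-c +ᵥ K) (x - c)`; this
fixes the frontier. If `K` reaches `{f ≥ ρ}`, the intermediate value theorem and the density of
the interior give `c` with `max (f s) (f t) < f c < ρ`; the projection of the half-plane
`{f < f c}` is then a connected part of the frontier through `s` and `t`, and it stays in
`{f < f c}` because the projection pushes points away from `c`. If `K ⊆ {f < ρ}`, the whole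
frontier works: it is the projection of `{c}ᶜ`, which is connected in dimension two.
-/

open MeasureTheory Real Set
open scoped InnerProductSpace

open Bornology Topology Pointwise

lemma frontier_vadd {M α : Type*} [TopologicalSpace α] [AddGroup M] [AddAction M α]
    [ContinuousConstVAdd M α] (c : M) (s : Set α) : frontier (c +ᵥ s) = c +ᵥ frontier s := by
  simp only [frontier, closure_vadd, interior_vadd, vadd_set_sdiff]

lemma neg_vadd_mem_nhds_zero {M : Type*} [TopologicalSpace M] [AddGroup M]
    [IsTopologicalAddGroup M] {s : Set M} {c : M} (hc : c ∈ interior s) : -c +ᵥ s ∈ 𝓝 0 := by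
  rw [← neg_add_cancel c, ← vadd_eq_add, vadd_mem_nhds_vadd_iff]
  exact mem_interior_iff_mem_nhds.1 hc

variable {E : Type*} [NormedAddCommGroup E] [NormedSpace ℝ E] {K : Set E} {c x : E}

lemma gauge_neg_vadd_sub_eq_one_iff (hK : Convex ℝ K) (hc : c ∈ interior K) :
    gauge (-c +ᵥ K) (x - c) = 1 ↔ x ∈ frontier K := by
  rw [gauge_eq_one_iff_mem_frontier (hK.vadd _) (neg_vadd_mem_nhds_zero hc), frontier_vadd,
    mem_vadd_set_iff_neg_vadd_mem, neg_neg, vadd_eq_add, add_sub_cancel]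

lemma gauge_neg_vadd_sub_pos (hb : IsBounded K) (hc : c ∈ interior K) (hx : x ≠ c) :
    0 < gauge (-c +ᵥ K) (x - c) :=
  (gauge_pos (absorbent_nhds_zero (neg_vadd_mem_nhds_zero hc))
    (NormedSpace.isVonNBounded_of_isBounded ℝ (hb.vadd _))).2 (sub_ne_zero.2 hx)

noncomputable def radialProjection (K : Set E) (c x : E) : E :=
  c + (gauge (-c +ᵥ K) (x - c))⁻¹ • (x - c)

lemma radialProjection_mem_frontier (hK : Convex ℝ K) (hb : IsBounded K) (hc : c ∈ interior K)
    (hx : x ≠ c) : radialProjection K c x ∈ frontier K := by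
  rw [← gauge_neg_vadd_sub_eq_one_iff hK hc, radialProjection, add_sub_cancel_left,
    gauge_smul_of_nonneg (inv_nonneg.2 (gauge_nonneg _)), smul_eq_mul,
    inv_mul_cancel₀ (gauge_neg_vadd_sub_pos hb hc hx).ne']

lemma radialProjection_eq_self (hK : Convex ℝ K) (hc : c ∈ interior K) (hx : x ∈ frontier K) :
    radialProjection K c x = x := by
  rw [radialProjection, (gauge_neg_vadd_sub_eq_one_iff hK hc).2 hx, inv_one, one_smul,
    add_sub_cancel]

lemma continuousOn_radialProjection (hK : Convex ℝ K) (hb : IsBounded K) (hc : c ∈ interior K) :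
    ContinuousOn (radialProjection K c) {c}ᶜ := by
  have hg : Continuous fun x => gauge (-c +ᵥ K) (x - c) :=
    (continuous_gauge (hK.vadd _) (neg_vadd_mem_nhds_zero hc)).comp (continuous_sub_right c)
  refine continuousOn_const.add (ContinuousOn.smul ?_ (continuous_sub_right c).continuousOn)
  exact hg.continuousOn.inv₀ fun x hx => (gauge_neg_vadd_sub_pos hb hc hx).ne'

lemma radialProjection_image_compl (hK : Convex ℝ K) (hb : IsBounded K) (hc : c ∈ interior K) :
    radialProjection K c '' {c}ᶜ = frontier K := by
  refine Subset.antisymm (image_subset_iff.2 fun x hx => radialProjection_mem_frontier hK hb hc hx)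
    fun x hx => ⟨x, ?_, radialProjection_eq_self hK hc hx⟩
  rintro rfl
  exact hx.2 hc

lemma apply_radialProjection_lt (f : StrongDual ℝ E) (hb : IsBounded K) (hc : c ∈ interior K)
    (hx : f x < f c) : f (radialProjection K c x) < f c := by
  have hpos := gauge_neg_vadd_sub_pos hb hc (ne_of_apply_ne f hx.ne)
  simp only [radialProjection, map_add, map_smul, map_sub, smul_eq_mul]
  linarith [mul_neg_of_pos_of_neg (inv_pos.2 hpos) (sub_neg.2 hx)]

lemma Convex.isPreconnected_frontier (hK : Convex ℝ K) (hb : IsBounded K)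
    (hE : 1 < Module.rank ℝ E) : IsPreconnected (frontier K) := by
  rcases (interior K).eq_empty_or_nonempty with hint | ⟨c, hc⟩
  · rw [frontier, hint, sdiff_empty]
    exact hK.closure.isPreconnected
  · rw [← radialProjection_image_compl hK hb hc]
    exact (isConnected_compl_singleton_of_one_lt_rank hE c).isPreconnected.image _
      (continuousOn_radialProjection hK hb hc)

lemma Convex.exists_isPreconnected_frontier_apply_lt_of_mem_interior (hK : Convex ℝ K)
    (hb : IsBounded K) (hc : c ∈ interior K) (f : StrongDual ℝ E) {s t : E} (hs : s ∈ frontier K)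
    (ht : t ∈ frontier K) (hsc : f s < f c) (htc : f t < f c) :
    ∃ S ⊆ frontier K, IsPreconnected S ∧ s ∈ S ∧ t ∈ S ∧ ∀ x ∈ S, f x < f c := by
  have hD : IsPreconnected {x | f x < f c} :=
    (convex_halfSpace_lt f.isBoundedLinearMap.toIsLinearMap _).isPreconnected
  refine ⟨radialProjection K c '' {x | f x < f c}, ?_, hD.image _ ?_,
    ⟨s, hsc, radialProjection_eq_self hK hc hs⟩, ⟨t, htc, radialProjection_eq_self hK hc ht⟩, ?_⟩
  · rintro _ ⟨x, hx, rfl⟩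
    exact radialProjection_mem_frontier hK hb hc (ne_of_apply_ne f hx.ne)
  · exact (continuousOn_radialProjection hK hb hc).mono fun x hx => ne_of_apply_ne f hx.ne
  · rintro _ ⟨x, hx, rfl⟩
    exact apply_radialProjection_lt f hb hc hx

lemma Convex.exists_mem_interior_apply_mem_Ioo (hK : Convex ℝ K) (hint : (interior K).Nonempty)
    (f : StrongDual ℝ E) {a b : E} {m r : ℝ} (ha : a ∈ closure K) (hb : b ∈ closure K)
    (hma : f a ≤ m) (hmr : m < r) (hrb : r ≤ f b) : ∃ c ∈ interior K, f c ∈ Ioo m r := by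
  obtain ⟨k, hk, hfk⟩ := hK.closure.isPreconnected.intermediate_value ha hb
    f.continuous.continuousOn (show (m + r) / 2 ∈ Icc (f a) (f b) by constructor <;> linarith)
  rw [← hK.closure_interior_eq_closure_of_nonempty_interior hint] at hk
  obtain ⟨c, hcU, hc⟩ := mem_closure_iff.1 hk _ (isOpen_Ioo.preimage f.continuous)
    (show f k ∈ Ioo m r by constructor <;> linarith)
  exact ⟨c, hc, hcU⟩

theorem Convex.exists_isPreconnected_frontier_apply_lt (hK : Convex ℝ K)
    (hb : IsBounded K) (hE : 1 < Module.rank ℝ E) (f : StrongDual ℝ E) {s t : E} {ρ : ℝ}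
    (hs : s ∈ frontier K) (ht : t ∈ frontier K) (hsρ : f s < ρ) (htρ : f t < ρ) :
    ∃ S ⊆ frontier K, IsPreconnected S ∧ s ∈ S ∧ t ∈ S ∧ ∀ x ∈ S, f x < ρ := by
  rcases (interior K).eq_empty_or_nonempty with hint | hint
  · have hfr : frontier K = closure K := by rw [frontier, hint, sdiff_empty]
    refine ⟨closure K ∩ {x | f x < ρ}, hfr ▸ inter_subset_left,
      (hK.closure.inter (convex_halfSpace_lt f.isBoundedLinearMap.toIsLinearMap _)).isPreconnected,
      ⟨hfr ▸ hs, hsρ⟩, ⟨hfr ▸ ht, htρ⟩, fun x hx => hx.2⟩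
  by_cases hbelow : closure K ⊆ {x | f x < ρ}
  · exact ⟨frontier K, subset_rfl, hK.isPreconnected_frontier hb hE, hs, ht,
      fun x hx => hbelow (frontier_subset_closure hx)⟩
  obtain ⟨b, hbK, hρb⟩ := not_subset.1 hbelow
  obtain ⟨c, hc, hmc, hcρ⟩ := hK.exists_mem_interior_apply_mem_Ioo hint f
    (frontier_subset_closure hs) hbK le_sup_left (max_lt hsρ htρ) (not_lt.1 hρb)
  obtain ⟨S, hSK, hS, hsS, htS, hSc⟩ :=
    hK.exists_isPreconnected_frontier_apply_lt_of_mem_interior hb hc f hs ht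
      ((le_max_left _ _).trans_lt hmc) ((le_max_right _ _).trans_lt hmc)
  exact ⟨S, hSK, hS, hsS, htS, fun x hx => (hSc x hx).trans hcρ⟩

theorem stmt_11_general (K : Set (EuclideanSpace ℝ (Fin 2)))
    (hKc : IsCompact K) (hKconv : Convex ℝ K)
    (s t : EuclideanSpace ℝ (Fin 2)) (hs : s ∈ frontier K) (ht : t ∈ frontier K)
    (Γ : Set (EuclideanSpace ℝ (Fin 2))) (hsΓ : s ∉ Γ) (htΓ : t ∉ Γ) (θ ρ : ℝ) :
    (∃ S : Set (EuclideanSpace ℝ (Fin 2)), S ⊆ frontier K ∧ IsConnected S ∧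
        s ∈ S ∧ t ∈ S ∧ (S \ Γ) ∩ R θ ρ = ∅)
      ↔ (∃ S : Set (EuclideanSpace ℝ (Fin 2)), S ⊆ frontier K ∧ IsConnected S ∧
        s ∈ S ∧ t ∈ S ∧ S ∩ R θ ρ = ∅) := by
  have hE : 1 < Module.rank ℝ (EuclideanSpace ℝ (Fin 2)) := by
    rw [← Module.finrank_eq_rank, finrank_euclideanSpace_fin]; norm_num
  have hR : ∀ x, x ∈ R θ ρ ↔ ρ ≤ innerSL ℝ (u θ) x := fun x => by
    rw [innerSL_apply_apply, real_inner_comm]; rfl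
  constructor
  · rintro ⟨S, -, -, hsS, htS, hSR⟩
    have below : ∀ x ∈ S, x ∉ Γ → innerSL ℝ (u θ) x < ρ := fun x hx hxΓ =>
      not_le.1 fun h => eq_empty_iff_forall_notMem.1 hSR x ⟨⟨hx, hxΓ⟩, (hR x).2 h⟩
    obtain ⟨S', hS'K, hS', hsS', htS', hS'ρ⟩ :=
      hKconv.exists_isPreconnected_frontier_apply_lt hKc.isBounded hE (innerSL ℝ (u θ))
        hs ht (below s hsS hsΓ) (below t htS htΓ)
    exact ⟨S', hS'K, ⟨⟨s, hsS'⟩, hS'⟩, hsS', htS',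
      eq_empty_of_forall_notMem fun x hx => (hS'ρ x hx.1).not_ge ((hR x).1 hx.2)⟩
  · rintro ⟨S, hSK, hS, hsS, htS, hSR⟩
    exact ⟨S, hSK, hS, hsS, htS,
      subset_empty_iff.1 (hSR ▸ inter_subset_inter_left _ sdiff_subset)⟩

/-- Theorem 4(2) of the paper for a convex two-route network without inner parts:
if the protected part `Γ` contains neither `s` nor `t`, then partial protection does not
change the disconnection events, hence does not improve the connection probability. -/
theorem stmt_11 (K : Set (EuclideanSpace ℝ (Fin 2)))
    (hKc : IsCompact K) (hKconv : Convex ℝ K) (hKne : K.Nonempty)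
    (s t : EuclideanSpace ℝ (Fin 2)) (hs : s ∈ frontier K) (ht : t ∈ frontier K)
    (Γ : Set (EuclideanSpace ℝ (Fin 2))) (hsΓ : s ∉ Γ) (htΓ : t ∉ Γ) (θ ρ : ℝ) :
    (∃ S : Set (EuclideanSpace ℝ (Fin 2)), S ⊆ frontier K ∧ IsConnected S ∧
        s ∈ S ∧ t ∈ S ∧ (S \ Γ) ∩ R θ ρ = ∅)
      ↔ (∃ S : Set (EuclideanSpace ℝ (Fin 2)), S ⊆ frontier K ∧ IsConnected S ∧
        s ∈ S ∧ t ∈ S ∧ S ∩ R θ ρ = ∅) :=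
  stmt_11_general K hKc hKconv s t hs ht Γ hsΓ htΓ θ ρ
end
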